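/- arXiv:2210.12269 — 10 statements merged into one kernel-verified Lean document; each statement's English description precedes it below -/
import Mathlib

section
/- The classical missionaries-and-cannibals puzzle (M, C, B, d) = (3, 3, 2, 0) is solvable, and the minimal length of a solution is 11; that is, there exists a solution of length 11 and there is no solution of length less than 11. -/
/-- A state: (missionaries at first bank, cannibals at first bank, boat at first bank). -/
abbrev MCState := ℕ × ℕ × Bool

/-- A state is legal for parameters M, C, d. -/
def MCLegal (M C d : ℕ) (s : MCState) : Prop :=
  s.1 ≤ M ∧ s.2.1 ≤ C ∧
  (0 < s.1 ∧ 0 < s.2.1 → s.1 ≥ s.2.1 + d) ∧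
  (0 < M - s.1 ∧ 0 < C - s.2.1 → M - s.1 ≥ (C - s.2.1) + d)

/-- A legal boat load of e1 missionaries and e2 cannibals. -/
def MCLoad (B d e1 e2 : ℕ) : Prop :=
  1 ≤ e1 + e2 ∧ e1 + e2 ≤ B ∧ (0 < e1 ∧ 0 < e2 → e1 ≥ e2 + d)

/-- A move from state `s` to state `t` carrying e1 missionaries and e2 cannibals. -/
def MCMoveLoad (M C B d e1 e2 : ℕ) (s t : MCState) : Prop :=
  MCLegal M C d s ∧ MCLegal M C d t ∧ MCLoad B d e1 e2 ∧
  ((s.2.2 = true ∧ e1 ≤ s.1 ∧ e2 ≤ s.2.1 ∧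
      t = (s.1 - e1, s.2.1 - e2, false)) ∨
   (s.2.2 = false ∧ s.1 + e1 ≤ M ∧ s.2.1 + e2 ≤ C ∧
      t = (s.1 + e1, s.2.1 + e2, true)))

/-- A move from state `s` to state `t` with some legal load. -/
def MCMove (M C B d : ℕ) (s t : MCState) : Prop :=
  ∃ e1 e2, MCMoveLoad M C B d e1 e2 s t

/-- `s` is a solution of length `k` of the puzzle (M, C, B, d). -/
def MCSolution (M C B d k : ℕ) (s : Fin (k + 1) → MCState) : Prop :=
  s 0 = (M, C, true) ∧ s (Fin.last k) = (0, 0, false) ∧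
  ∀ i : Fin k, MCMove M C B d (s i.castSucc) (s i.succ)

/-- The puzzle (M, C, B, d) is solvable. -/
def MCSolvable (M C B d : ℕ) : Prop :=
  ∃ k, ∃ s : Fin (k + 1) → MCState, MCSolution M C B d k s

/-- The minimal length of a solution of the puzzle (M, C, B, d). -/
noncomputable def MCMinLength (M C B d : ℕ) : ℕ :=
  sInf {k | ∃ s : Fin (k + 1) → MCState, MCSolution M C B d k s}

/-- The number of solutions of minimal length of the puzzle (M, C, B, d). -/
noncomputable def MCNumMinSolutions (M C B d : ℕ) : ℕ :=
  Nat.card {s : Fin (MCMinLength M C B d + 1) → MCState //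
    MCSolution M C B d (MCMinLength M C B d) s}

section Aux

noncomputable instance (M C d : ℕ) (s : MCState) : Decidable (MCLegal M C d s) :=
  inferInstanceAs (Decidable (_ ∧ _ ∧ _ ∧ _))

noncomputable instance (B d e1 e2 : ℕ) : Decidable (MCLoad B d e1 e2) :=
  inferInstanceAs (Decidable (_ ∧ _ ∧ _))

noncomputable instance (M C B d e1 e2 : ℕ) (s t : MCState) : Decidable (MCMoveLoad M C B d e1 e2 s t) :=
  inferInstanceAs (Decidable (_ ∧ _ ∧ _ ∧ (_ ∨ _)))

/-- Bounded version of `MCMove` for (3,3,2,0). -/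
def MCMove' (s t : MCState) : Prop :=
  ∃ e1 < 3, ∃ e2 < 3, MCMoveLoad 3 3 2 0 e1 e2 s t

noncomputable instance (s t : MCState) : Decidable (MCMove' s t) :=
  inferInstanceAs (Decidable (∃ e1 < 3, ∃ e2 < 3, _))

lemma mcmove_iff (s t : MCState) : MCMove 3 3 2 0 s t ↔ MCMove' s t := by
  constructor
  · rintro ⟨e1, e2, h⟩
    have hB : e1 + e2 ≤ 2 := h.2.2.1.2.1
    exact ⟨e1, by omega, e2, by omega, h⟩
  · rintro ⟨e1, _, e2, _, h⟩
    exact ⟨e1, e2, h⟩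

/-- All candidate states. -/
def mcCand : List MCState :=
  (List.range 4).flatMap fun m => (List.range 4).flatMap fun c => [(m, c, true), (m, c, false)]

lemma mem_mcCand (m c : ℕ) (b : Bool) (h1 : m ≤ 3) (h2 : c ≤ 3) : ((m, c, b) : MCState) ∈ mcCand := by
  simp only [mcCand, List.mem_flatMap, List.mem_range]
  refine ⟨m, by omega, c, by omega, ?_⟩
  cases b <;> simp

/-- States reachable in `n` steps. -/
noncomputable def mcReach (n : ℕ) : List MCState :=
  Nat.rec [((3:ℕ), (3:ℕ), true)]
    (fun _ prev => (prev.flatMap fun s => mcCand.filter fun t => decide (MCMove' s t)).dedup) n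

lemma mcReach_zero : mcReach 0 = [(3, 3, true)] := rfl

lemma mcReach_succ (n : ℕ) :
    mcReach (n + 1) =
      ((mcReach n).flatMap fun s => mcCand.filter fun t => decide (MCMove' s t)).dedup := rfl

lemma mcReach_step {s t : MCState} (hs : s ∈ mcReach n) (h : MCMove 3 3 2 0 s t) :
    t ∈ mcReach (n + 1) := by
  have h' := (mcmove_iff s t).1 h
  obtain ⟨e1, _, e2, _, hml⟩ := h'
  have hleg : MCLegal 3 3 0 t := hml.2.1
  rw [mcReach_succ, List.mem_dedup, List.mem_flatMap]
  refine ⟨s, hs, ?_⟩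
  rw [List.mem_filter]
  obtain ⟨m, c, b⟩ := t
  exact ⟨mem_mcCand m c b hleg.1 hleg.2.1, by simp only [decide_eq_true_eq]; exact ⟨e1, ‹_›, e2, ‹_›, hml⟩⟩

lemma mcReach_sol {k : ℕ} {s : Fin (k + 1) → MCState} (hs : MCSolution 3 3 2 0 k s) :
    ∀ n (hn : n ≤ k), s ⟨n, Nat.lt_succ_of_le hn⟩ ∈ mcReach n := by
  intro n
  induction n with
  | zero => intro _; have h0 := hs.1; simpa [show (⟨0, Nat.lt_succ_of_le (Nat.zero_le k)⟩ : Fin (k+1)) = 0 from rfl, h0] using (by simp [mcReach_zero] : ((3,3,true) : MCState) ∈ mcReach 0)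
  | succ n ih =>
    intro hn
    have hn' : n ≤ k := Nat.le_of_succ_le hn
    have hnk : n < k := hn
    have hmove := hs.2.2 ⟨n, hnk⟩
    have hcs : (⟨n, hnk⟩ : Fin k).castSucc = ⟨n, Nat.lt_succ_of_le hn'⟩ := rfl
    have hsc : (⟨n, hnk⟩ : Fin k).succ = ⟨n + 1, Nat.lt_succ_of_le hn⟩ := rfl
    rw [hcs, hsc] at hmove
    exact mcReach_step (ih hn') hmove

/-- The explicit length-11 solution. -/
def mcSol : Fin 12 → MCState :=
  fun i => [((3:ℕ),(3:ℕ),true),(3,1,false),(3,2,true),(3,0,false),(3,1,true),(1,1,false),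
    (2,2,true),(0,2,false),(0,3,true),(0,1,false),(0,2,true),(0,0,false)].get
      (Fin.cast (by rfl) i)

lemma mcSol_works : MCSolution 3 3 2 0 11 mcSol := by
  refine ⟨by decide, by decide, fun i => (mcmove_iff _ _).2 ?_⟩
  revert i; decide

end Aux

/-- The puzzle (3,3,2,0) is solvable with minimal solution length 11: there is a
solution of length 11 and no solution of length less than 11. -/
theorem stmt0 :
    MCSolvable 3 3 2 0 ∧
    (∃ s : Fin 12 → MCState, MCSolution 3 3 2 0 11 s) ∧
    (∀ k < 11, ¬ ∃ s : Fin (k + 1) → MCState, MCSolution 3 3 2 0 k s) := by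
  refine ⟨⟨11, mcSol, mcSol_works⟩, ⟨mcSol, mcSol_works⟩, ?_⟩
  rintro k hk ⟨s, hs⟩
  have hmem := mcReach_sol hs k le_rfl
  have hlast : (⟨k, Nat.lt_succ_of_le le_rfl⟩ : Fin (k+1)) = Fin.last k := rfl
  rw [hlast, hs.2.1] at hmem
  interval_cases k <;> revert hmem <;> decide
end

section
/- The puzzle (M, C, B, d) = (3, 3, 2, 0) has exactly 4 solutions of minimal length (equivalently, exactly 4 solutions of length 11). -/
-- decidability of MCMove for B = 2
noncomputable instance mcLegal.dec (M C d : ℕ) (s : MCState) : Decidable (MCLegal M C d s) :=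
  decidable_of_iff (s.1 ≤ M ∧ s.2.1 ≤ C ∧
    (0 < s.1 ∧ 0 < s.2.1 → s.1 ≥ s.2.1 + d) ∧
    (0 < M - s.1 ∧ 0 < C - s.2.1 → M - s.1 ≥ (C - s.2.1) + d)) Iff.rfl

noncomputable instance mcLoad.dec (B d e1 e2 : ℕ) : Decidable (MCLoad B d e1 e2) :=
  decidable_of_iff (1 ≤ e1 + e2 ∧ e1 + e2 ≤ B ∧ (0 < e1 ∧ 0 < e2 → e1 ≥ e2 + d)) Iff.rfl

noncomputable instance mcMoveLoad.dec (M C B d e1 e2 : ℕ) (s t : MCState) :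
    Decidable (MCMoveLoad M C B d e1 e2 s t) :=
  decidable_of_iff (MCLegal M C d s ∧ MCLegal M C d t ∧ MCLoad B d e1 e2 ∧
    ((s.2.2 = true ∧ e1 ≤ s.1 ∧ e2 ≤ s.2.1 ∧
        t = (s.1 - e1, s.2.1 - e2, false)) ∨
     (s.2.2 = false ∧ s.1 + e1 ≤ M ∧ s.2.1 + e2 ≤ C ∧
        t = (s.1 + e1, s.2.1 + e2, true)))) Iff.rfl

theorem mcMove_iff (M C d : ℕ) (s t : MCState) :
    MCMove M C 2 d s t ↔ ∃ e1 < 3, ∃ e2 < 3, MCMoveLoad M C 2 d e1 e2 s t := by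
  constructor
  · rintro ⟨e1, e2, h⟩
    have hb := h.2.2.1.2.1
    exact ⟨e1, by omega, e2, by omega, h⟩
  · rintro ⟨e1, _, e2, _, h⟩
    exact ⟨e1, e2, h⟩

noncomputable instance mcMove.dec (M C d : ℕ) (s t : MCState) : Decidable (MCMove M C 2 d s t) :=
  decidable_of_iff _ (mcMove_iff M C d s t).symm

noncomputable instance mcSolution.dec (M C d k : ℕ) (s : Fin (k + 1) → MCState) :
    Decidable (MCSolution M C 2 d k s) :=
  decidable_of_iff (s 0 = (M, C, true) ∧ s (Fin.last k) = (0, 0, false) ∧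
    ∀ i : Fin k, MCMove M C 2 d (s i.castSucc) (s i.succ)) Iff.rfl

def allStates : List MCState :=
  (List.range 4).flatMap fun m => (List.range 4).flatMap fun c => [(m, c, true), (m, c, false)]

theorem mem_allStates (s : MCState) (h1 : s.1 ≤ 3) (h2 : s.2.1 ≤ 3) : s ∈ allStates := by
  obtain ⟨m, c, b⟩ := s
  simp only at h1 h2
  interval_cases m <;> interval_cases c <;> cases b <;> decide

noncomputable def fwd (l : List MCState) : List MCState :=
  allStates.filter fun t => decide (∃ u ∈ l, MCMove 3 3 2 0 u t)

noncomputable def bwd (l : List MCState) : List MCState :=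
  allStates.filter fun u => decide (∃ t ∈ l, MCMove 3 3 2 0 u t)

noncomputable def LL : ℕ → List MCState
  | 0 => [(3, 3, true)]
  | n + 1 => fwd (LL n)

noncomputable def RR : ℕ → List MCState
  | 0 => [(0, 0, false)]
  | n + 1 => bwd (RR n)

theorem mem_fwd {l : List MCState} {u t : MCState} (hu : u ∈ l) (h : MCMove 3 3 2 0 u t) :
    t ∈ fwd l := by
  have hleg : MCLegal 3 3 0 t := by obtain ⟨e1, e2, h⟩ := h; exact h.2.1
  refine List.mem_filter.2 ⟨mem_allStates t hleg.1 hleg.2.1, ?_⟩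
  simp only [decide_eq_true_eq]
  exact ⟨u, hu, h⟩

theorem mem_bwd {l : List MCState} {u t : MCState} (ht : t ∈ l) (h : MCMove 3 3 2 0 u t) :
    u ∈ bwd l := by
  have hleg : MCLegal 3 3 0 u := by obtain ⟨e1, e2, h⟩ := h; exact h.1
  refine List.mem_filter.2 ⟨mem_allStates u hleg.1 hleg.2.1, ?_⟩
  simp only [decide_eq_true_eq]
  exact ⟨t, ht, h⟩

theorem sol_mem_LL {k : ℕ} {s : Fin (k + 1) → MCState} (hs : MCSolution 3 3 2 0 k s) :
    ∀ n (hn : n < k + 1), s ⟨n, hn⟩ ∈ LL n := by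
  intro n
  induction n with
  | zero =>
    intro hn
    have : (⟨0, hn⟩ : Fin (k+1)) = 0 := rfl
    rw [this, hs.1]; simp [LL]
  | succ m ih =>
    intro hn
    have hm : m < k := by omega
    have hmove := hs.2.2 ⟨m, hm⟩
    exact mem_fwd (ih (by omega)) hmove

theorem sol_mem_RR {k : ℕ} {s : Fin (k + 1) → MCState} (hs : MCSolution 3 3 2 0 k s) :
    ∀ n (hn : n ≤ k), s ⟨k - n, by omega⟩ ∈ RR n := by
  intro n
  induction n with
  | zero =>
    intro hn
    have : (⟨k - 0, by omega⟩ : Fin (k + 1)) = Fin.last k := by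
      apply Fin.ext; simp
    rw [this, hs.2.1]
    simp [RR]
  | succ m ih =>
    intro hn
    have hm : k - (m + 1) < k := by omega
    have hmove := hs.2.2 ⟨k - (m + 1), hm⟩
    have h1 : (⟨k - (m+1), hm⟩ : Fin k).castSucc = ⟨k - (m + 1), by omega⟩ := by
      apply Fin.ext; simp
    have h2 : (⟨k - (m+1), hm⟩ : Fin k).succ = (⟨k - m, by omega⟩ : Fin (k + 1)) := by
      apply Fin.ext; simp; omega
    rw [h1, h2] at hmove
    exact mem_bwd (ih (by omega)) hmove

-- no solution shorter than 11
theorem no_short : ∀ k < 11, ((0, 0, false) : MCState) ∉ LL k := by decide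

-- explicit solutions
def wsol (a b : MCState) : Fin 12 → MCState := fun i =>
  match i.val with
  | 0 => (3, 3, true) | 1 => a | 2 => (3, 2, true) | 3 => (3, 0, false)
  | 4 => (3, 1, true) | 5 => (1, 1, false) | 6 => (2, 2, true) | 7 => (0, 2, false)
  | 8 => (0, 3, true) | 9 => (0, 1, false) | 10 => b | _ => (0, 0, false)

theorem wsol_sol :
    ∀ a ∈ [((3:ℕ), (1:ℕ), false), (2, 2, false)], ∀ b ∈ [((0:ℕ), (2:ℕ), true), (1, 1, true)],
      MCSolution 3 3 2 0 11 (wsol a b) := by decide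

-- forced states
theorem forced0 : ∀ x ∈ LL 0, x ∈ RR 11 → x = ((3,3,true) : MCState) := by decide

theorem forced1 : ∀ x ∈ LL 1, x ∈ RR 10 → x = ((3,1,false) : MCState) ∨ x = (2,2,false) := by decide

theorem forced2 : ∀ x ∈ LL 2, x ∈ RR 9 → x = ((3,2,true) : MCState) := by decide

theorem forced3 : ∀ x ∈ LL 3, x ∈ RR 8 → x = ((3,0,false) : MCState) := by decide

theorem forced4 : ∀ x ∈ LL 4, x ∈ RR 7 → x = ((3,1,true) : MCState) := by decide

theorem forced5 : ∀ x ∈ LL 5, x ∈ RR 6 → x = ((1,1,false) : MCState) := by decide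

theorem forced6 : ∀ x ∈ LL 6, x ∈ RR 5 → x = ((2,2,true) : MCState) := by decide

theorem forced7 : ∀ x ∈ LL 7, x ∈ RR 4 → x = ((0,2,false) : MCState) := by decide

theorem forced8 : ∀ x ∈ LL 8, x ∈ RR 3 → x = ((0,3,true) : MCState) := by decide

theorem forced9 : ∀ x ∈ LL 9, x ∈ RR 2 → x = ((0,1,false) : MCState) := by decide

theorem forced10 : ∀ x ∈ LL 10, x ∈ RR 1 → x = ((0,2,true) : MCState) ∨ x = (1,1,true) := by decide

theorem forced11 : ∀ x ∈ LL 11, x ∈ RR 0 → x = ((0,0,false) : MCState) := by decide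

theorem minLen : MCMinLength 3 3 2 0 = 11 := by
  have hsol : MCSolution 3 3 2 0 11 (wsol (3,1,false) (0,2,true)) :=
    wsol_sol _ (by simp) _ (by simp)
  have hmem : 11 ∈ {k | ∃ s : Fin (k + 1) → MCState, MCSolution 3 3 2 0 k s} :=
    ⟨_, hsol⟩
  refine le_antisymm (Nat.sInf_le hmem) (le_csInf ⟨11, hmem⟩ ?_)
  rintro k ⟨s, hs⟩
  by_contra hk
  push_neg at hk
  have := sol_mem_LL hs k (by omega)
  rw [show (⟨k, by omega⟩ : Fin (k+1)) = Fin.last k from rfl, hs.2.1] at this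
  exact no_short k hk this

theorem build_wsol (s : Fin 12 → MCState) (a b : MCState)
    (h0 : s ⟨0, by omega⟩ = (3,3,true))
    (h1 : s ⟨1, by omega⟩ = a)
    (h2 : s ⟨2, by omega⟩ = (3,2,true))
    (h3 : s ⟨3, by omega⟩ = (3,0,false))
    (h4 : s ⟨4, by omega⟩ = (3,1,true))
    (h5 : s ⟨5, by omega⟩ = (1,1,false))
    (h6 : s ⟨6, by omega⟩ = (2,2,true))
    (h7 : s ⟨7, by omega⟩ = (0,2,false))
    (h8 : s ⟨8, by omega⟩ = (0,3,true))
    (h9 : s ⟨9, by omega⟩ = (0,1,false))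
    (h10 : s ⟨10, by omega⟩ = b)
    (h11 : s ⟨11, by omega⟩ = (0,0,false)) :
    s = wsol a b := by
  funext i
  fin_cases i
  · exact h0
  · exact h1
  · exact h2
  · exact h3
  · exact h4
  · exact h5
  · exact h6
  · exact h7
  · exact h8
  · exact h9
  · exact h10
  · exact h11

theorem sol_iff (s : Fin 12 → MCState) :
    MCSolution 3 3 2 0 11 s ↔
      s = wsol (3,1,false) (0,2,true) ∨ s = wsol (3,1,false) (1,1,true) ∨
      s = wsol (2,2,false) (0,2,true) ∨ s = wsol (2,2,false) (1,1,true) := by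
  constructor
  · intro hs
    have hL := sol_mem_LL hs
    have hR := sol_mem_RR hs
    have h0 := forced0 _ (hL 0 (by omega)) (hR 11 (by omega))
    have h1 := forced1 _ (hL 1 (by omega)) (hR 10 (by omega))
    have h2 := forced2 _ (hL 2 (by omega)) (hR 9 (by omega))
    have h3 := forced3 _ (hL 3 (by omega)) (hR 8 (by omega))
    have h4 := forced4 _ (hL 4 (by omega)) (hR 7 (by omega))
    have h5 := forced5 _ (hL 5 (by omega)) (hR 6 (by omega))
    have h6 := forced6 _ (hL 6 (by omega)) (hR 5 (by omega))
    have h7 := forced7 _ (hL 7 (by omega)) (hR 4 (by omega))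
    have h8 := forced8 _ (hL 8 (by omega)) (hR 3 (by omega))
    have h9 := forced9 _ (hL 9 (by omega)) (hR 2 (by omega))
    have h10 := forced10 _ (hL 10 (by omega)) (hR 1 (by omega))
    have h11 := forced11 _ (hL 11 (by omega)) (hR 0 (by omega))
    rcases h1 with h1 | h1 <;> rcases h10 with h10 | h10
    · exact Or.inl (build_wsol s _ _ h0 h1 h2 h3 h4 h5 h6 h7 h8 h9 h10 h11)
    · exact Or.inr (Or.inl (build_wsol s _ _ h0 h1 h2 h3 h4 h5 h6 h7 h8 h9 h10 h11))
    · exact Or.inr (Or.inr (Or.inl (build_wsol s _ _ h0 h1 h2 h3 h4 h5 h6 h7 h8 h9 h10 h11)))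
    · exact Or.inr (Or.inr (Or.inr (build_wsol s _ _ h0 h1 h2 h3 h4 h5 h6 h7 h8 h9 h10 h11)))
  · rintro (rfl | rfl | rfl | rfl) <;> exact wsol_sol _ (by simp) _ (by simp)

theorem wsol_inj {a b a' b' : MCState} (h : wsol a b = wsol a' b') : a = a' ∧ b = b' :=
  ⟨congrFun h 1, congrFun h 10⟩

/-- The puzzle (3,3,2,0) has exactly 4 solutions of minimal length. -/
theorem stmt1 : MCNumMinSolutions 3 3 2 0 = 4 := by
  unfold MCNumMinSolutions
  rw [minLen]
  have e : {s : Fin (11 + 1) → MCState // MCSolution 3 3 2 0 11 s} ≃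
      ({wsol (3,1,false) (0,2,true), wsol (3,1,false) (1,1,true),
        wsol (2,2,false) (0,2,true), wsol (2,2,false) (1,1,true)} :
        Set (Fin 12 → MCState)) :=
    Equiv.subtypeEquivRight fun s => by
      rw [sol_iff]; simp [Set.mem_insert_iff]
  rw [Nat.card_congr e, Nat.card_coe_set_eq]
  have d1 : wsol ((3:ℕ),(1:ℕ),false) ((0:ℕ),(2:ℕ),true) ≠ wsol (3,1,false) (1,1,true) := by
    intro h; simpa using (wsol_inj h).2
  have d2 : wsol ((3:ℕ),(1:ℕ),false) ((0:ℕ),(2:ℕ),true) ≠ wsol (2,2,false) (0,2,true) := by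
    intro h; simpa using (wsol_inj h).1
  have d3 : wsol ((3:ℕ),(1:ℕ),false) ((0:ℕ),(2:ℕ),true) ≠ wsol (2,2,false) (1,1,true) := by
    intro h; simpa using (wsol_inj h).1
  have d4 : wsol ((3:ℕ),(1:ℕ),false) ((1:ℕ),(1:ℕ),true) ≠ wsol (2,2,false) (0,2,true) := by
    intro h; simpa using (wsol_inj h).1
  have d5 : wsol ((3:ℕ),(1:ℕ),false) ((1:ℕ),(1:ℕ),true) ≠ wsol (2,2,false) (1,1,true) := by
    intro h; simpa using (wsol_inj h).1
  have d6 : wsol ((2:ℕ),(2:ℕ),false) ((0:ℕ),(2:ℕ),true) ≠ wsol (2,2,false) (1,1,true) := by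
    intro h; simpa using (wsol_inj h).2
  rw [Set.ncard_insert_of_notMem (by simp [d1, d2, d3])
      ((Set.finite_singleton _).insert _ |>.insert _),
    Set.ncard_insert_of_notMem (by simp [d4, d5]) ((Set.finite_singleton _).insert _),
    Set.ncard_insert_of_notMem (by simp [d6]) (Set.finite_singleton _),
    Set.ncard_singleton]
end

section
/- The puzzle (M, C, B, d) = (4, 4, 2, 0) is not solvable: there is no solution of any length. -/
def MCInv (s : MCState) : Prop :=
  (s.1 = 2 ∧ s.2.1 = 2 ∧ s.2.2 = false) ∨
  (s.1 = 3 ∧ s.2.1 = 3 ∧ s.2.2 = false) ∨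
  (s.1 = 3 ∧ s.2.1 = 3 ∧ s.2.2 = true) ∨
  (s.1 = 4 ∧ s.2.1 = 0 ∧ s.2.2 = false) ∨
  (s.1 = 4 ∧ s.2.1 = 1 ∧ s.2.2 = false) ∨
  (s.1 = 4 ∧ s.2.1 = 1 ∧ s.2.2 = true) ∨
  (s.1 = 4 ∧ s.2.1 = 2 ∧ s.2.2 = false) ∨
  (s.1 = 4 ∧ s.2.1 = 2 ∧ s.2.2 = true) ∨
  (s.1 = 4 ∧ s.2.1 = 3 ∧ s.2.2 = false) ∨
  (s.1 = 4 ∧ s.2.1 = 3 ∧ s.2.2 = true) ∨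
  (s.1 = 4 ∧ s.2.1 = 4 ∧ s.2.2 = true)

set_option maxHeartbeats 1000000 in
lemma MCInv_closed : ∀ s t : MCState, MCInv s → MCMove 4 4 2 0 s t → MCInv t := by
  rintro ⟨m, c, b⟩ ⟨m', c', b'⟩ hs ⟨e1, e2, _, ht, ⟨h1, h2, _⟩, hmv⟩
  obtain ⟨hm', hc', hl1, hl2⟩ := ht
  rcases hmv with ⟨rfl, he1, he2, heq⟩ | ⟨rfl, he1, he2, heq⟩ <;>
    simp only [Prod.mk.injEq] at heq <;>
    obtain ⟨rfl, rfl, rfl⟩ := heq <;>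
    simp only [MCInv, Bool.true_eq_false, Bool.false_eq_true, and_false, false_or, or_false,
      and_true] at hs hl1 hl2 ⊢ <;>
    omega

/-- The puzzle (4,4,2,0) is not solvable. -/
theorem stmt2 : ¬ MCSolvable 4 4 2 0 := by
  rintro ⟨k, s, h0, hlast, hmv⟩
  have hinv : ∀ i : Fin (k + 1), MCInv (s i) := by
    intro i
    induction i using Fin.induction with
    | zero => rw [h0]; simp [MCInv]
    | succ i ih => exact MCInv_closed _ _ ih (hmv i)
  have := hinv (Fin.last k)
  rw [hlast] at this
  simp [MCInv] at this
end

section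
/- For every natural number n ≥ 1, the puzzle (M, C, B, d) = (n, n, 2, 0) (n missionaries, n cannibals, boat capacity 2, safety margin 0) is solvable if and only if n ≤ 3. -/
lemma mc_inv_step {n : ℕ} (hn : 4 ≤ n) {s t : MCState}
    (h : MCMove n n 2 0 s t)
    (hs : s.1 = n ∨ (s.1 = n-1 ∧ s.2.1 = n-1) ∨ (s.1 = n-2 ∧ s.2.1 = n-2 ∧ s.2.2 = false)) :
    t.1 = n ∨ (t.1 = n-1 ∧ t.2.1 = n-1) ∨ (t.1 = n-2 ∧ t.2.1 = n-2 ∧ t.2.2 = false) := by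
  obtain ⟨e1, e2, hls, hlt, hload, hcase⟩ := h
  obtain ⟨m, c, b⟩ := s
  obtain ⟨hl1, hl2, hl3⟩ := hload
  rcases hcase with ⟨hb, he1, he2, ht⟩ | ⟨hb, he1, he2, ht⟩ <;> subst ht <;> subst hb <;>
    simp only [MCLegal] at hls hlt <;> simp_all <;> omega

lemma mc_sol1 : MCSolvable 1 1 2 0 := by
  refine ⟨1, ![(1,1,true),(0,0,false)], rfl, rfl, ?_⟩
  intro i
  fin_cases i
  exact ⟨1, 1, by unfold MCMoveLoad MCLegal MCLoad; decide⟩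

lemma mc_sol2 : MCSolvable 2 2 2 0 := by
  refine ⟨5, ![(2,2,true),(2,0,false),(2,1,true),(0,1,false),(0,2,true),(0,0,false)],
    rfl, rfl, ?_⟩
  intro i
  fin_cases i
  · exact ⟨0, 2, by unfold MCMoveLoad MCLegal MCLoad; decide⟩
  · exact ⟨0, 1, by unfold MCMoveLoad MCLegal MCLoad; decide⟩
  · exact ⟨2, 0, by unfold MCMoveLoad MCLegal MCLoad; decide⟩
  · exact ⟨0, 1, by unfold MCMoveLoad MCLegal MCLoad; decide⟩
  · exact ⟨0, 2, by unfold MCMoveLoad MCLegal MCLoad; decide⟩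

lemma mc_sol3 : MCSolvable 3 3 2 0 := by
  refine ⟨11, ![(3,3,true),(3,1,false),(3,2,true),(3,0,false),(3,1,true),(1,1,false),
    (2,2,true),(0,2,false),(0,3,true),(0,1,false),(1,1,true),(0,0,false)], rfl, rfl, ?_⟩
  intro i
  fin_cases i
  · exact ⟨0, 2, by unfold MCMoveLoad MCLegal MCLoad; decide⟩
  · exact ⟨0, 1, by unfold MCMoveLoad MCLegal MCLoad; decide⟩
  · exact ⟨0, 2, by unfold MCMoveLoad MCLegal MCLoad; decide⟩
  · exact ⟨0, 1, by unfold MCMoveLoad MCLegal MCLoad; decide⟩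
  · exact ⟨2, 0, by unfold MCMoveLoad MCLegal MCLoad; decide⟩
  · exact ⟨1, 1, by unfold MCMoveLoad MCLegal MCLoad; decide⟩
  · exact ⟨2, 0, by unfold MCMoveLoad MCLegal MCLoad; decide⟩
  · exact ⟨0, 1, by unfold MCMoveLoad MCLegal MCLoad; decide⟩
  · exact ⟨0, 2, by unfold MCMoveLoad MCLegal MCLoad; decide⟩
  · exact ⟨1, 0, by unfold MCMoveLoad MCLegal MCLoad; decide⟩
  · exact ⟨1, 1, by unfold MCMoveLoad MCLegal MCLoad; decide⟩

/-- For n ≥ 1, the puzzle (n,n,2,0) is solvable iff n ≤ 3. -/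
theorem stmt3 (n : ℕ) (hn : 1 ≤ n) : MCSolvable n n 2 0 ↔ n ≤ 3 := by
  constructor
  · intro ⟨k, s, h0, hlast, hmove⟩
    by_contra hle
    have hn4 : 4 ≤ n := by omega
    have key : ∀ i : Fin (k+1),
        (s i).1 = n ∨ ((s i).1 = n-1 ∧ (s i).2.1 = n-1) ∨
        ((s i).1 = n-2 ∧ (s i).2.1 = n-2 ∧ (s i).2.2 = false) := by
      intro i
      induction i using Fin.induction with
      | zero => rw [h0]; left; rfl
      | succ j ih => exact mc_inv_step hn4 (hmove j) ih
    have := key (Fin.last k)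
    rw [hlast] at this
    simp only at this
    omega
  · intro h
    interval_cases n
    · exact mc_sol1
    · exact mc_sol2
    · exact mc_sol3
end

section
/- For every natural number n ≥ 2 and every boat capacity B ≥ 4, the puzzle (M, C, B, d) = (n, n, B, 0) is solvable, and in fact has a solution of length 2n − 3 (obtained by alternating a crossing carrying 2 missionaries and 2 cannibals with a return trip carrying 1 missionary and 1 cannibal). -/
def sfun (n j : ℕ) : MCState :=
  if j % 2 = 0 then (n - j / 2, n - j / 2, true)
  else (n - j / 2 - 2, n - j / 2 - 2, false)

lemma legal_eq (n a : ℕ) (h : a ≤ n) (b : Bool) : MCLegal n n 0 (a, a, b) := by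
  simp only [MCLegal]
  omega

lemma move_fw (n B a : ℕ) (hB : 4 ≤ B) (h2 : 2 ≤ a) (hn : a ≤ n) :
    MCMove n n B 0 (a, a, true) (a - 2, a - 2, false) :=
  ⟨2, 2, legal_eq n a hn true, legal_eq n (a - 2) (by omega) false,
    ⟨by omega, by omega, fun _ => by omega⟩,
    Or.inl ⟨rfl, h2, h2, rfl⟩⟩

lemma move_bw (n B a : ℕ) (hB : 4 ≤ B) (h : a + 1 ≤ n) :
    MCMove n n B 0 (a, a, false) (a + 1, a + 1, true) :=
  ⟨1, 1, legal_eq n a (by omega) false, legal_eq n (a + 1) h true,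
    ⟨by omega, by omega, fun _ => by omega⟩,
    Or.inr ⟨rfl, h, h, rfl⟩⟩

/-- For n ≥ 2 and B ≥ 4, the puzzle (n,n,B,0) is solvable, and in fact
has a solution of length 2n - 3. -/
theorem stmt5 (n B : ℕ) (hn : 2 ≤ n) (hB : 4 ≤ B) :
    MCSolvable n n B 0 ∧
    ∃ s : Fin (2 * n - 3 + 1) → MCState, MCSolution n n B 0 (2 * n - 3) s := by
  have key : ∃ s : Fin (2 * n - 3 + 1) → MCState, MCSolution n n B 0 (2 * n - 3) s := by
    refine ⟨fun j => sfun n j.val, ?_, ?_, ?_⟩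
    · simp [sfun]
    · have h1 : (2 * n - 3) % 2 = 1 := by omega
      have h2 : (2 * n - 3) / 2 = n - 2 := by omega
      show sfun n (2 * n - 3) = (0, 0, false)
      simp only [sfun, h1, h2]
      norm_num
      omega
    · intro i
      have hi : i.val < 2 * n - 3 := i.isLt
      show MCMove n n B 0 (sfun n i.val) (sfun n (i.val + 1))
      rcases Nat.even_or_odd i.val with ⟨k, hk⟩ | ⟨k, hk⟩
      · have e1 : i.val % 2 = 0 := by omega
        have e2 : i.val / 2 = k := by omega
        have e3 : (i.val + 1) % 2 = 1 := by omega
        have e4 : (i.val + 1) / 2 = k := by omega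
        have hs : sfun n i.val = (n - k, n - k, true) := by
          simp only [sfun, e1, e2]; norm_num
        have ht : sfun n (i.val + 1) = (n - k - 2, n - k - 2, false) := by
          simp only [sfun, e3, e4]; norm_num
        rw [hs, ht]
        exact move_fw n B (n - k) hB (by omega) (by omega)
      · have e1 : i.val % 2 = 1 := by omega
        have e2 : i.val / 2 = k := by omega
        have e3 : (i.val + 1) % 2 = 0 := by omega
        have e4 : (i.val + 1) / 2 = k + 1 := by omega
        have hs : sfun n i.val = (n - k - 2, n - k - 2, false) := by
          simp only [sfun, e1, e2]; norm_num
        have ht : sfun n (i.val + 1) = (n - k - 2 + 1, n - k - 2 + 1, true) := by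
          simp only [sfun, e3, e4]; norm_num; omega
        rw [hs, ht]
        exact move_bw n B (n - k - 2) hB (by omega)
  exact ⟨⟨2 * n - 3, key⟩, key⟩
end

section
/- Let M = C = n, d = 0 and B ≤ 3. If there is a move with load (e1, e2) from a legal state (m, c, b) to a legal state (m', c', ¬b), and both B < m < n − B and B < m' < n − B hold, then e1 = e2 = 1. In particular, when the boat capacity is at most 3 and both banks hold many missionaries and cannibals, the only legal moves carry exactly one missionary and one cannibal, so no net progress can be made. -/
/-- With M = C = n, d = 0 and B ≤ 3: a move with load (e1, e2) between legal states
(m, c, b) and (m', c', ¬b), with B < m < n - B and B < m' < n - B, must carry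
exactly one missionary and one cannibal. -/
theorem stmt9 (n B e1 e2 m c m' c' : ℕ) (b : Bool) (hB : B ≤ 3)
    (hmove : MCMoveLoad n n B 0 e1 e2 (m, c, b) (m', c', !b))
    (h1 : B < m) (h2 : m < n - B) (h3 : B < m') (h4 : m' < n - B) :
    e1 = 1 ∧ e2 = 1 := by
  obtain ⟨hs, ht, hl, hmv⟩ := hmove
  simp only [MCLegal, MCLoad] at hs ht hl
  cases b <;> simp_all [Prod.ext_iff] <;> omega
end

section
/- (Two Boat Strategy.) If C ≥ 1, B ≥ 2, and M ≥ C + 2d + 3, then the puzzle (M, C, B, d) is solvable. -/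
private lemma mkFwd (M C B d m c e1 e2 m' c' : ℕ)
    (h : (1 ≤ e1 + e2 ∧ e1 + e2 ≤ B ∧ (0 < e1 ∧ 0 < e2 → e2 + d ≤ e1)) ∧
      e1 ≤ m ∧ e2 ≤ c ∧ m' = m - e1 ∧ c' = c - e2 ∧
      (m ≤ M ∧ c ≤ C ∧ (0 < m ∧ 0 < c → c + d ≤ m) ∧
        (0 < M - m ∧ 0 < C - c → C - c + d ≤ M - m)) ∧
      (m' ≤ M ∧ c' ≤ C ∧ (0 < m' ∧ 0 < c' → c' + d ≤ m') ∧
        (0 < M - m' ∧ 0 < C - c' → C - c' + d ≤ M - m'))) :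
    MCMove M C B d (m, c, true) (m', c', false) := by
  obtain ⟨hl, h1, h2, hm', hc', hs, ht⟩ := h
  subst hm'; subst hc'
  exact ⟨e1, e2, ⟨hs.1, hs.2.1, hs.2.2.1, hs.2.2.2⟩, ⟨ht.1, ht.2.1, ht.2.2.1, ht.2.2.2⟩,
    ⟨hl.1, hl.2.1, hl.2.2⟩, Or.inl ⟨rfl, h1, h2, rfl⟩⟩

private lemma mkBwd (M C B d m c e1 e2 m' c' : ℕ)
    (h : (1 ≤ e1 + e2 ∧ e1 + e2 ≤ B ∧ (0 < e1 ∧ 0 < e2 → e2 + d ≤ e1)) ∧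
      m + e1 ≤ M ∧ c + e2 ≤ C ∧ m' = m + e1 ∧ c' = c + e2 ∧
      (m ≤ M ∧ c ≤ C ∧ (0 < m ∧ 0 < c → c + d ≤ m) ∧
        (0 < M - m ∧ 0 < C - c → C - c + d ≤ M - m)) ∧
      (m' ≤ M ∧ c' ≤ C ∧ (0 < m' ∧ 0 < c' → c' + d ≤ m') ∧
        (0 < M - m' ∧ 0 < C - c' → C - c' + d ≤ M - m'))) :
    MCMove M C B d (m, c, false) (m', c', true) := by
  obtain ⟨hl, h1, h2, hm', hc', hs, ht⟩ := h
  subst hm'; subst hc'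
  exact ⟨e1, e2, ⟨hs.1, hs.2.1, hs.2.2.1, hs.2.2.2⟩, ⟨ht.1, ht.2.1, ht.2.2.1, ht.2.2.2⟩,
    ⟨hl.1, hl.2.1, hl.2.2⟩, Or.inr ⟨rfl, h1, h2, rfl⟩⟩

private lemma solvFrom_aux (M C B d : ℕ) (s : MCState)
    (h : Relation.ReflTransGen (MCMove M C B d) s (0, 0, false)) :
    ∃ k, ∃ f : Fin (k + 1) → MCState, f 0 = s ∧ f (Fin.last k) = (0, 0, false) ∧
      ∀ i : Fin k, MCMove M C B d (f i.castSucc) (f i.succ) := by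
  induction h using Relation.ReflTransGen.head_induction_on with
  | refl => exact ⟨0, fun _ => (0, 0, false), rfl, rfl, fun i => i.elim0⟩
  | @head a c hac hcb ih =>
    obtain ⟨k, f, h0, hl, hm⟩ := ih
    refine ⟨k + 1, Fin.cases a f, by simp, ?_, ?_⟩
    · show Fin.cases a f (Fin.last k).succ = (0, 0, false)
      rw [Fin.cases_succ]; exact hl
    · intro i
      refine Fin.cases ?_ ?_ i
      · show MCMove M C B d (Fin.cases a f (Fin.castSucc 0)) (Fin.cases a f (Fin.succ 0))
        rw [Fin.castSucc_zero, Fin.cases_zero, Fin.cases_succ, h0]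
        exact hac
      · intro j
        show MCMove M C B d (Fin.cases a f j.succ.castSucc) (Fin.cases a f j.succ.succ)
        rw [← Fin.succ_castSucc, Fin.cases_succ, Fin.cases_succ]
        exact hm j

private lemma solvable_of (M C B d : ℕ)
    (h : Relation.ReflTransGen (MCMove M C B d) (M, C, true) (0, 0, false)) :
    MCSolvable M C B d := by
  obtain ⟨k, f, h0, hl, hm⟩ := solvFrom_aux M C B d _ h
  exact ⟨k, f, h0, hl, hm⟩

private lemma phase4 (M C B d : ℕ) (hB : 2 ≤ B) (hC : 1 ≤ C) (hM : C + 2 * d + 3 ≤ M) :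
    ∀ k, k ≤ d + 2 →
      Relation.ReflTransGen (MCMove M C B d) (k, 0, false) (0, 0, false)
  | 0, _ => .refl
  | k + 1, hk => by
    refine .head (mkBwd M C B d (k+1) 0 1 0 (k+2) 0 (by omega)) ?_
    refine .head (mkFwd M C B d (k+2) 0 2 0 k 0 (by omega)) ?_
    exact phase4 M C B d hB hC hM k (by omega)

private lemma phase3 (M C B d : ℕ) (hB : 2 ≤ B) (hC : 1 ≤ C) (hM : C + 2 * d + 3 ≤ M) :
    Relation.ReflTransGen (MCMove M C B d) (d + 3, 1, true) (0, 0, false) := by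
  refine .head (mkFwd M C B d (d+3) 1 2 0 (d+1) 1 (by omega)) ?_
  refine .head (mkBwd M C B d (d+1) 1 1 0 (d+2) 1 (by omega)) ?_
  refine .head (mkFwd M C B d (d+2) 1 0 1 (d+2) 0 (by omega)) ?_
  refine .head (mkBwd M C B d (d+2) 0 1 0 (d+3) 0 (by omega)) ?_
  refine .head (mkFwd M C B d (d+3) 0 2 0 (d+1) 0 (by omega)) ?_
  exact phase4 M C B d hB hC hM (d+1) (by omega)

private lemma phase2 (M C B d : ℕ) (hB : 2 ≤ B) (hM : C + 2 * d + 3 ≤ M) :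
    ∀ n, n + 1 ≤ C →
      Relation.ReflTransGen (MCMove M C B d) (n+1+d+2, n+1, true) (d+3, 1, true)
  | 0, _ => by
    have h1 : 0+1+d+2 = d+3 := by omega
    have h2 : (0:ℕ)+1 = 1 := by omega
    rw [h1, h2]
  | n + 1, hn => by
    refine .head (mkFwd M C B d (n+1+1+d+2) (n+1+1) 2 0 (n+d+2) (n+1+1) (by omega)) ?_
    refine .head (mkBwd M C B d (n+d+2) (n+1+1) 1 0 (n+d+3) (n+1+1) (by omega)) ?_
    refine .head (mkFwd M C B d (n+d+3) (n+1+1) 0 2 (n+d+3) n (by omega)) ?_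
    refine .head (mkBwd M C B d (n+d+3) n 0 1 (n+1+d+2) (n+1) (by omega)) ?_
    exact phase2 M C B d hB hM n (by omega)

private lemma phase1 (M C B d : ℕ) (hB : 2 ≤ B) :
    ∀ j, C + d + 2 + j ≤ M →
      Relation.ReflTransGen (MCMove M C B d) (C+d+2+j, C, true) (C+d+2, C, true)
  | 0, _ => .refl
  | j + 1, hj => by
    refine .head (mkFwd M C B d (C+d+2+(j+1)) C 2 0 (C+d+1+j) C (by omega)) ?_
    refine .head (mkBwd M C B d (C+d+1+j) C 1 0 (C+d+2+j) C (by omega)) ?_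
    exact phase1 M C B d hB j (by omega)

/-- Two Boat Strategy: if C ≥ 1, B ≥ 2 and M ≥ C + 2d + 3 then the puzzle is solvable. -/
theorem stmt10 (M C B d : ℕ) (hC : 1 ≤ C) (hB : 2 ≤ B)
    (hM : M ≥ C + 2 * d + 3) : MCSolvable M C B d := by
  obtain ⟨n, rfl⟩ : ∃ n, C = n + 1 := ⟨C - 1, by omega⟩
  obtain ⟨j, rfl⟩ : ∃ j, M = n+1+d+2+j := ⟨M - (n+1+d+2), by omega⟩
  apply solvable_of
  have h1 := phase1 (n+1+d+2+j) (n+1) B d hB j (le_refl _)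
  have h2 := phase2 (n+1+d+2+j) (n+1) B d hB (by omega) n (le_refl _)
  have h3 := phase3 (n+1+d+2+j) (n+1) B d hB (by omega) (by omega)
  exact (h1.trans h2).trans h3
end

section
/- (Big Boat Strategy #1.) If C ≥ 1, M ≥ C + d + 1, and B ≥ C + d + 1, then the puzzle (M, C, B, d) is solvable. -/
lemma mc_mk_eq {a b c d : ℕ} {p q : Bool} (h1 : a = b) (h2 : c = d) (h3 : p = q) :
    ((a, c, p) : MCState) = (b, d, q) := by subst h1; subst h2; subst h3; rfl

lemma relseq_to_sol' {α : Type*} {R : α → α → Prop} {a b : α}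
    (h : Relation.ReflTransGen R a b) :
    ∃ k, ∃ s : Fin (k + 1) → α, s 0 = a ∧ s (Fin.last k) = b ∧
      ∀ i : Fin k, R (s i.castSucc) (s i.succ) := by
  induction h with
  | refl => exact ⟨0, fun _ => a, rfl, rfl, fun i => i.elim0⟩
  | @tail b' c _ hbc ih =>
    obtain ⟨k, s, h0, hl, hm⟩ := ih
    refine ⟨k + 1, Fin.snoc s c, ?_, ?_, ?_⟩
    · rw [show (0 : Fin (k + 2)) = Fin.castSucc 0 from rfl, Fin.snoc_castSucc]
      exact h0
    · rw [Fin.snoc_last]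
    · intro i
      refine Fin.lastCases ?_ ?_ i
      · rw [Fin.succ_last, Fin.snoc_last, Fin.snoc_castSucc, hl]
        exact hbc
      · intro j
        rw [Fin.succ_castSucc, Fin.snoc_castSucc, Fin.snoc_castSucc]
        exact hm j

lemma mc_phase1 (M C B d : ℕ) (hC : 1 ≤ C) (hM : M ≥ C + d + 1) (hB : B ≥ C + d + 1) :
    ∀ x, C + d + 1 ≤ x → x ≤ M →
    Relation.ReflTransGen (MCMove M C B d) (x, C, true) (0, C, false) := by
  intro x
  induction x using Nat.strong_induction_on with
  | _ x ih =>
    intro hx1 hx2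
    by_cases hxB : x ≤ B
    · refine Relation.ReflTransGen.single
        ⟨x, 0, by simp [MCLegal] <;> omega, by simp [MCLegal] <;> omega,
          by simp [MCLoad] <;> omega,
          Or.inl ⟨rfl, by simp <;> omega, by simp <;> omega,
            by refine mc_mk_eq ?_ ?_ rfl <;> simp <;> omega⟩⟩
    · push_neg at hxB
      obtain ⟨t, ht2, htB, htx⟩ : ∃ t, 2 ≤ t ∧ t ≤ B ∧ t ≤ x - (C + d) :=
        ⟨min B (x - (C + d)), le_min (by omega) (by omega), min_le_left _ _, min_le_right _ _⟩
      have step1 : MCMove M C B d (x, C, true) (x - t, C, false) :=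
        ⟨t, 0, by simp [MCLegal] <;> omega, by simp [MCLegal] <;> omega,
          by simp [MCLoad] <;> omega,
          Or.inl ⟨rfl, by simp <;> omega, by simp <;> omega,
            by refine mc_mk_eq ?_ ?_ rfl <;> simp <;> omega⟩⟩
      have step2 : MCMove M C B d (x - t, C, false) (x - t + 1, C, true) :=
        ⟨1, 0, by simp [MCLegal] <;> omega, by simp [MCLegal] <;> omega,
          by simp [MCLoad] <;> omega,
          Or.inr ⟨rfl, by simp <;> omega, by simp <;> omega,
            by refine mc_mk_eq ?_ ?_ rfl <;> simp <;> omega⟩⟩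
      have hrec := ih (x - t + 1) (by omega) (by omega) (by omega)
      exact Relation.ReflTransGen.trans
        ((Relation.ReflTransGen.single step1).tail step2) hrec

lemma mc_phase4 (M C B d : ℕ) (hC : 1 ≤ C) (hM : M ≥ C + d + 1) (hB : B ≥ C + d + 1) :
    ∀ c, c + 1 ≤ C →
    Relation.ReflTransGen (MCMove M C B d) (0, c, false) (0, 0, false) := by
  intro c
  induction c using Nat.strong_induction_on with
  | _ c ih =>
    intro hc
    rcases Nat.eq_zero_or_pos c with rfl | hcpos
    · exact Relation.ReflTransGen.refl
    · obtain ⟨u, hu2, huB, huc⟩ : ∃ u, 2 ≤ u ∧ u ≤ B ∧ u ≤ c + 1 :=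
        ⟨min B (c + 1), le_min (by omega) (by omega), min_le_left _ _, min_le_right _ _⟩
      have step1 : MCMove M C B d (0, c, false) (0, c + 1, true) :=
        ⟨0, 1, by simp [MCLegal] <;> omega, by simp [MCLegal] <;> omega,
          by simp [MCLoad] <;> omega,
          Or.inr ⟨rfl, by simp <;> omega, by simp <;> omega,
            by refine mc_mk_eq ?_ ?_ rfl <;> simp <;> omega⟩⟩
      have step2 : MCMove M C B d (0, c + 1, true) (0, c + 1 - u, false) :=
        ⟨0, u, by simp [MCLegal] <;> omega, by simp [MCLegal] <;> omega,
          by simp [MCLoad] <;> omega,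
          Or.inl ⟨rfl, by simp <;> omega, by simp <;> omega,
            by refine mc_mk_eq ?_ ?_ rfl <;> simp <;> omega⟩⟩
      have hrec := ih (c + 1 - u) (by omega) (by omega)
      exact Relation.ReflTransGen.trans
        ((Relation.ReflTransGen.single step1).tail step2) hrec


/-- Big Boat Strategy #1: if C ≥ 1, M ≥ C + d + 1 and B ≥ C + d + 1 then the puzzle
is solvable. -/
theorem stmt11 (M C B d : ℕ) (hC : 1 ≤ C) (hM : M ≥ C + d + 1)
    (hB : B ≥ C + d + 1) : MCSolvable M C B d := by
  have h1 := mc_phase1 M C B d hC hM hB M (by omega) (le_refl _)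
  have step2 : MCMove M C B d (0, C, false) (C + d, C, true) :=
    ⟨C + d, 0, by simp [MCLegal] <;> omega, by simp [MCLegal] <;> omega,
      by simp [MCLoad] <;> omega,
      Or.inr ⟨rfl, by simp <;> omega, by simp <;> omega,
        by refine mc_mk_eq ?_ ?_ rfl <;> simp <;> omega⟩⟩
  have step3 : MCMove M C B d (C + d, C, true) (0, C - 1, false) :=
    ⟨C + d, 1, by simp [MCLegal] <;> omega, by simp [MCLegal] <;> omega,
      by simp [MCLoad] <;> omega,
      Or.inl ⟨rfl, by simp <;> omega, by simp <;> omega,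
        by refine mc_mk_eq ?_ ?_ rfl <;> simp <;> omega⟩⟩
  have h4 := mc_phase4 M C B d hC hM hB (C - 1) (by omega)
  have hchain : Relation.ReflTransGen (MCMove M C B d) (M, C, true) (0, 0, false) :=
    Relation.ReflTransGen.trans ((h1.tail step2).tail step3) h4
  obtain ⟨k, s, h0, hl, hm⟩ := relseq_to_sol' hchain
  exact ⟨k, s, h0, hl, hm⟩
end

section
/- (Big Boat Strategy #2.) If C ≥ 2, M ≥ C + d, and B ≥ M, then the puzzle (M, C, B, d) is solvable. -/
set_option linter.unreachableTactic false
set_option linter.unusedTactic false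


/-- Big Boat Strategy #2: if C ≥ 2, M ≥ C + d and B ≥ M then the puzzle is solvable. -/
theorem stmt12 (M C B d : ℕ) (hC : 2 ≤ C) (hM : M ≥ C + d) (hB : B ≥ M) :
    MCSolvable M C B d := by
  refine ⟨5, ![(M,C,true),(M,0,false),(M,1,true),(0,1,false),(0,C,true),(0,0,false)],
    rfl, rfl, ?_⟩
  intro i
  fin_cases i
  · show MCMove M C B d (M,C,true) (M,0,false)
    exact ⟨0, C, ⟨le_refl M, le_refl C, by first | (dsimp only; omega) | omega, by first | (dsimp only; omega) | omega⟩,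
      ⟨le_refl M, by first | (dsimp only; omega) | omega, by first | (dsimp only; omega) | omega, by first | (dsimp only; omega) | omega⟩,
      ⟨by first | (dsimp only; omega) | omega, by first | (dsimp only; omega) | omega, by first | (dsimp only; omega) | omega⟩,
      Or.inl ⟨rfl, by first | (dsimp only; omega) | omega, by first | (dsimp only; omega) | omega, by simp⟩⟩
  · show MCMove M C B d (M,0,false) (M,1,true)
    exact ⟨0, 1, ⟨le_refl M, by first | (dsimp only; omega) | omega, by first | (dsimp only; omega) | omega, by first | (dsimp only; omega) | omega⟩,
      ⟨le_refl M, by first | (dsimp only; omega) | omega, by first | (dsimp only; omega) | omega, by first | (dsimp only; omega) | omega⟩,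
      ⟨by first | (dsimp only; omega) | omega, by first | (dsimp only; omega) | omega, by first | (dsimp only; omega) | omega⟩,
      Or.inr ⟨rfl, by first | (dsimp only; omega) | omega, by first | (dsimp only; omega) | omega, by simp⟩⟩
  · show MCMove M C B d (M,1,true) (0,1,false)
    exact ⟨M, 0, ⟨le_refl M, by first | (dsimp only; omega) | omega, by first | (dsimp only; omega) | omega, by first | (dsimp only; omega) | omega⟩,
      ⟨by first | (dsimp only; omega) | omega, by first | (dsimp only; omega) | omega, by first | (dsimp only; omega) | omega, by first | (dsimp only; omega) | omega⟩,
      ⟨by first | (dsimp only; omega) | omega, by first | (dsimp only; omega) | omega, by first | (dsimp only; omega) | omega⟩,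
      Or.inl ⟨rfl, by first | (dsimp only; omega) | omega, by first | (dsimp only; omega) | omega, by simp⟩⟩
  · show MCMove M C B d (0,1,false) (0,C,true)
    exact ⟨0, C - 1, ⟨by first | (dsimp only; omega) | omega, by first | (dsimp only; omega) | omega, by first | (dsimp only; omega) | omega, by first | (dsimp only; omega) | omega⟩,
      ⟨by first | (dsimp only; omega) | omega, le_refl C, by first | (dsimp only; omega) | omega, by first | (dsimp only; omega) | omega⟩,
      ⟨by first | (dsimp only; omega) | omega, by first | (dsimp only; omega) | omega, by first | (dsimp only; omega) | omega⟩,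
      Or.inr ⟨rfl, by first | (dsimp only; omega) | omega, by first | (dsimp only; omega) | omega, by simp; omega⟩⟩
  · show MCMove M C B d (0,C,true) (0,0,false)
    exact ⟨0, C, ⟨by first | (dsimp only; omega) | omega, le_refl C, by first | (dsimp only; omega) | omega, by first | (dsimp only; omega) | omega⟩,
      ⟨by first | (dsimp only; omega) | omega, by first | (dsimp only; omega) | omega, by first | (dsimp only; omega) | omega, by first | (dsimp only; omega) | omega⟩,
      ⟨by first | (dsimp only; omega) | omega, by first | (dsimp only; omega) | omega, by first | (dsimp only; omega) | omega⟩,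
      Or.inl ⟨rfl, by first | (dsimp only; omega) | omega, by first | (dsimp only; omega) | omega, by simp⟩⟩
end

section
/- (Simultaneous Ferry Strategy.) If d ≥ 1, C ≥ 1, M ≥ C + 3d, and B ≥ d + 2, then the puzzle (M, C, B, d) is solvable. -/
lemma mcLegal_mk {M C d m c : ℕ} {b : Bool}
    (h1 : m ≤ M) (h2 : c ≤ C) (h3 : 0 < m ∧ 0 < c → m ≥ c + d)
    (h4 : 0 < M - m ∧ 0 < C - c → M - m ≥ (C - c) + d) :
    MCLegal M C d (m, c, b) := ⟨h1, h2, h3, h4⟩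

lemma mcLoad_mk {B d e1 e2 : ℕ} (h1 : 1 ≤ e1 + e2) (h2 : e1 + e2 ≤ B)
    (h3 : 0 < e1 ∧ 0 < e2 → e1 ≥ e2 + d) : MCLoad B d e1 e2 := ⟨h1, h2, h3⟩

lemma mcMove_fwd' {M C B d : ℕ} (e1 e2 m c m' c' : ℕ)
    (hm : m = m' + e1) (hc : c = c' + e2)
    (h1 : MCLegal M C d (m, c, true))
    (h2 : MCLegal M C d (m', c', false))
    (hl : MCLoad B d e1 e2) :
    MCMove M C B d (m, c, true) (m', c', false) := by
  subst hm hc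
  exact ⟨e1, e2, h1, h2, hl, Or.inl ⟨rfl, Nat.le_add_left _ _, Nat.le_add_left _ _, by simp⟩⟩

lemma mcMove_bwd' {M C B d : ℕ} (e1 e2 m c m' c' : ℕ)
    (hm : m' = m + e1) (hc : c' = c + e2)
    (h1 : MCLegal M C d (m, c, false))
    (h2 : MCLegal M C d (m', c', true))
    (hl : MCLoad B d e1 e2) :
    MCMove M C B d (m, c, false) (m', c', true) := by
  subst hm hc
  exact ⟨e1, e2, h1, h2, hl, Or.inr ⟨rfl, h2.1, h2.2.1, rfl⟩⟩

lemma mcState_eq {m m' c c' : ℕ} {b : Bool} (h1 : m = m') (h2 : c = c') :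
    ((m, c, b) : MCState) = (m', c', b) := by subst h1 h2; rfl

lemma mcReach_solvable {M C B d : ℕ}
    (h : Relation.ReflTransGen (MCMove M C B d) (M, C, true) ((0, 0, false) : MCState)) :
    MCSolvable M C B d := by
  suffices H : ∀ a : MCState, Relation.ReflTransGen (MCMove M C B d) a (0, 0, false) →
      ∃ k, ∃ f : Fin (k + 1) → MCState, f 0 = a ∧ f (Fin.last k) = (0, 0, false) ∧
        ∀ i : Fin k, MCMove M C B d (f i.castSucc) (f i.succ) by
    obtain ⟨k, f, h0, hl, hm⟩ := H _ h
    exact ⟨k, f, h0, hl, hm⟩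
  intro a ha
  induction ha using Relation.ReflTransGen.head_induction_on with
  | refl => exact ⟨0, fun _ => (0, 0, false), rfl, rfl, fun i => i.elim0⟩
  | @head x c hab hbc ih =>
    obtain ⟨k, f, h0, hl, hm⟩ := ih
    refine ⟨k + 1, Fin.cases x f, by simp, ?_, ?_⟩
    · show (Fin.cases x f (Fin.last (k + 1)) : MCState) = _
      rw [← Fin.succ_last, Fin.cases_succ]; exact hl
    · intro i
      induction i using Fin.cases with
      | zero =>
        show MCMove M C B d (Fin.cases x f ((0 : Fin (k+1)).castSucc))
          (Fin.cases x f ((0 : Fin (k+1)).succ))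
        have e1 : ((0 : Fin (k+1)).castSucc : Fin (k+2)) = 0 := rfl
        rw [e1, Fin.cases_zero, Fin.cases_succ, h0]
        exact hab
      | succ j =>
        show MCMove M C B d (Fin.cases x f (j.succ.castSucc))
          (Fin.cases x f (j.succ.succ))
        rw [← Fin.succ_castSucc, Fin.cases_succ, Fin.cases_succ]
        exact hm j

/-- Simultaneous Ferry Strategy: if d ≥ 1, C ≥ 1, M ≥ C + 3d and B ≥ d + 2 then
the puzzle is solvable. -/
theorem stmt14 (M C B d : ℕ) (hd : 1 ≤ d) (hC : 1 ≤ C) (hM : M ≥ C + 3 * d)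
    (hB : B ≥ d + 2) : MCSolvable M C B d := by
  obtain ⟨d', rfl⟩ : ∃ d', d = d' + 1 := ⟨d - 1, by omega⟩
  obtain ⟨c0, rfl⟩ : ∃ c0, C = c0 + 1 := ⟨C - 1, by omega⟩
  obtain ⟨a, rfl⟩ : ∃ a, M = c0 + 1 + 3 * d' + 3 + a :=
    ⟨M - (c0 + 1 + 3 * d' + 3), by omega⟩
  apply mcReach_solvable
  set M := c0 + 1 + 3 * d' + 3 + a with hMdef
  set C := c0 + 1 with hCdef
  -- Phase 1: ferry extra missionaries across two-at-a-time, one returns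
  have prologue : ∀ n : ℕ, n ≤ d' + 1 + a → Relation.ReflTransGen (MCMove M C B (d' + 1))
      (C + 2 * d' + 2 + n, C, true) (C + 2 * d' + 2, C, true) := by
    intro n
    induction n with
    | zero => intro _; exact .refl
    | succ n ih =>
      intro hn
      refine .head (mcMove_fwd' 2 0 _ _ (C + 2 * d' + 1 + n) C (by omega) (by omega)
          (mcLegal_mk (by omega) (by omega) (by omega) (by omega))
          (mcLegal_mk (by omega) (by omega) (by omega) (by omega))
          (mcLoad_mk (by omega) (by omega) (by omega)))
        (.head (mcMove_bwd' 1 0 _ _ (C + 2 * d' + 2 + n) C (by omega) (by omega)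
          (mcLegal_mk (by omega) (by omega) (by omega) (by omega))
          (mcLegal_mk (by omega) (by omega) (by omega) (by omega))
          (mcLoad_mk (by omega) (by omega) (by omega))) (ih (by omega)))
  -- Phase 2: each cycle moves d'+2 missionaries and 1 cannibal over, d'+1 missionaries back
  have main : ∀ n : ℕ, n + 1 ≤ C → Relation.ReflTransGen (MCMove M C B (d' + 1))
      (n + 1 + 2 * d' + 2, n + 1, true) (1 + 2 * d' + 2, 1, true) := by
    intro n
    induction n with
    | zero => intro _; exact .refl
    | succ n ih =>
      intro h
      refine .head (mcMove_fwd' (d' + 2) 1 _ _ (n + d' + 2) (n + 1) (by omega) (by omega)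
          (mcLegal_mk (by omega) (by omega) (by omega) (by omega))
          (mcLegal_mk (by omega) (by omega) (by omega) (by omega))
          (mcLoad_mk (by omega) (by omega) (by omega)))
        (.head (mcMove_bwd' (d' + 1) 0 _ _ (n + 1 + 2 * d' + 2) (n + 1) (by omega) (by omega)
          (mcLegal_mk (by omega) (by omega) (by omega) (by omega))
          (mcLegal_mk (by omega) (by omega) (by omega) (by omega))
          (mcLoad_mk (by omega) (by omega) (by omega))) (ih (by omega)))
  -- Phase 3: final three moves
  have fin1 : MCMove M C B (d' + 1) (1 + 2 * d' + 2, 1, true) (d' + 1, 0, false) :=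
    mcMove_fwd' (d' + 2) 1 _ _ (d' + 1) 0 (by omega) (by omega)
      (mcLegal_mk (by omega) (by omega) (by omega) (by omega))
      (mcLegal_mk (by omega) (by omega) (by omega) (by omega))
      (mcLoad_mk (by omega) (by omega) (by omega))
  have fin2 : MCMove M C B (d' + 1) (d' + 1, 0, false) (d' + 2, 0, true) :=
    mcMove_bwd' 1 0 _ _ (d' + 2) 0 (by omega) (by omega)
      (mcLegal_mk (by omega) (by omega) (by omega) (by omega))
      (mcLegal_mk (by omega) (by omega) (by omega) (by omega))
      (mcLoad_mk (by omega) (by omega) (by omega))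
  have fin3 : MCMove M C B (d' + 1) (d' + 2, 0, true) (0, 0, false) :=
    mcMove_fwd' (d' + 2) 0 _ _ 0 0 (by omega) (by omega)
      (mcLegal_mk (by omega) (by omega) (by omega) (by omega))
      (mcLegal_mk (by omega) (by omega) (by omega) (by omega))
      (mcLoad_mk (by omega) (by omega) (by omega))
  have estart : ((M, C, true) : MCState) = (C + 2 * d' + 2 + (d' + 1 + a), C, true) :=
    mcState_eq (by omega) rfl
  rw [estart]
  exact ((prologue (d' + 1 + a) le_rfl).trans (main c0 (by omega))).trans
    (.head fin1 (.head fin2 (.single fin3)))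
end
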